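/- arXiv:0709.3446 — 3 statements merged into one kernel-verified Lean document; each statement's English description precedes it below -/
import Mathlib

section
/- For all real numbers a > 0 and b > 0, ∫_0^∞ (e^{-bx} - 1/(1+ax)) dx/x = ln(a/b) - γ. -/
/-!
Substituting `x = y / b` reduces the integral to the case `b = 1`, `c = a / b`. There the
integrand is the derivative of `log (1 + c y) + (exp (-y) - 1) log y + ∫₀^y exp (-t) log t dt`,
which vanishes at `0` and tends to `log c - γ` at infinity, since
`∫₀^∞ exp (-t) log t dt = Γ'(1) = -γ`.
-/

open MeasureTheory Real Set Filter Topology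

theorem integral_exp_neg_mul_log :
    ∫ t in Ioi (0 : ℝ), exp (-t) * log t = -eulerMascheroniConstant := by
  have hGamma : HasDerivAt Complex.GammaIntegral (-eulerMascheroniConstant) 1 :=
    Complex.hasDerivAt_Gamma_one.congr_of_eventuallyEq <| by
      filter_upwards [(isOpen_lt continuous_const Complex.continuous_re).mem_nhds
        (by norm_num : (0 : ℝ) < (1 : ℂ).re)] with s hs
      exact (Complex.Gamma_eq_integral hs).symm
  have h := (Complex.hasDerivAt_GammaIntegral (s := 1) one_pos).unique hGamma
  rw [← Complex.ofReal_inj, Complex.ofReal_neg, ← h, ← integral_complex_ofReal]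
  refine setIntegral_congr_fun measurableSet_Ioi fun t _ => ?_
  simp [mul_comm]

theorem integrableOn_exp_neg_mul_log :
    IntegrableOn (fun t => exp (-t) * log t) (Ioi 0) :=
  .of_integral_ne_zero <| by
    rw [integral_exp_neg_mul_log, neg_ne_zero]
    exact (one_half_pos.trans one_half_lt_eulerMascheroniConstant).ne'

theorem intervalIntegrable_exp_neg_mul_log (a b : ℝ) :
    IntervalIntegrable (fun t => exp (-t) * log t) volume a b :=
  intervalIntegral.intervalIntegrable_log'.continuousOn_mul (by fun_prop)

theorem tendsto_exp_neg_sub_one_mul_log :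
    Tendsto (fun y => (exp (-y) - 1) * log y) (𝓝[≥] 0) (𝓝 0) := by
  have hmul : Tendsto (fun y => y * log y) (𝓝[≥] 0) (𝓝 0) := by
    simpa using continuous_mul_log.continuousAt.tendsto.mono_left (nhdsWithin_le_nhds (a := 0))
  refine squeeze_zero_norm' ?_ (hmul.norm.trans (by simp))
  filter_upwards [self_mem_nhdsWithin] with y (hy : 0 ≤ y)
  rw [norm_mul, norm_mul, Real.norm_of_nonneg hy]
  gcongr
  rw [Real.norm_of_nonpos (by simpa using exp_le_one_iff.2 (neg_nonpos.2 hy))]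
  linarith [one_sub_le_exp_neg y]

theorem tendsto_exp_neg_mul_log_atTop :
    Tendsto (fun y => exp (-y) * log y) atTop (𝓝 0) := by
  refine squeeze_zero_norm' ?_ (by simpa using tendsto_pow_mul_exp_neg_atTop_nhds_zero 1)
  filter_upwards [eventually_ge_atTop 1] with y hy
  rw [norm_mul, Real.norm_of_nonneg (log_nonneg hy), Real.norm_of_nonneg (exp_pos _).le, mul_comm]
  gcongr
  exact log_le_self (by linarith)

noncomputable def expSubInvPrimitive (c y : ℝ) : ℝ :=
  log (1 + c * y) + (exp (-y) - 1) * log y + ∫ t in (0)..y, exp (-t) * log t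

theorem hasDerivAt_expSubInvPrimitive {c y : ℝ} (hc : 0 ≤ c) (hy : 0 < y) :
    HasDerivAt (expSubInvPrimitive c) ((exp (-y) - 1 / (1 + c * y)) / y) y := by
  have hcy : 0 < 1 + c * y := by positivity
  have hlog : HasDerivAt (fun y => log (1 + c * y)) (c / (1 + c * y)) y := by
    simpa using (((hasDerivAt_id y).const_mul c).const_add 1).log hcy.ne'
  have hexp : HasDerivAt (fun y => exp (-y) - 1) (-exp (-y)) y := by
    simpa using ((hasDerivAt_neg y).exp).sub_const 1
  have hmeas : Measurable fun t => exp (-t) * log t := by fun_prop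
  have hint : HasDerivAt (fun y => ∫ t in (0)..y, exp (-t) * log t) (exp (-y) * log y) y :=
    intervalIntegral.integral_hasDerivAt_right (intervalIntegrable_exp_neg_mul_log 0 y)
      hmeas.stronglyMeasurable.stronglyMeasurableAtFilter (by fun_prop (disch := exact hy.ne'))
  refine ((hlog.fun_add (hexp.fun_mul (hasDerivAt_log hy.ne'))).fun_add hint).congr_deriv ?_
  field_simp
  ring

theorem continuousWithinAt_expSubInvPrimitive (c : ℝ) :
    ContinuousWithinAt (expSubInvPrimitive c) (Ici 0) 0 := by
  have hlog : ContinuousAt (fun y => log (1 + c * y)) 0 := by fun_prop (disch := norm_num)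
  have hmul : ContinuousWithinAt (fun y => (exp (-y) - 1) * log y) (Ici 0) 0 := by
    simpa [ContinuousWithinAt] using tendsto_exp_neg_sub_one_mul_log
  exact (hlog.continuousWithinAt.add hmul).add
    (intervalIntegral.continuous_primitive intervalIntegrable_exp_neg_mul_log 0).continuousWithinAt

@[simp]
theorem expSubInvPrimitive_zero (c : ℝ) : expSubInvPrimitive c 0 = 0 := by
  simp [expSubInvPrimitive]

theorem tendsto_expSubInvPrimitive_atTop {c : ℝ} (hc : 0 < c) :
    Tendsto (expSubInvPrimitive c) atTop (𝓝 (log c - eulerMascheroniConstant)) := by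
  have hlog : Tendsto (fun y => log (c + y⁻¹)) atTop (𝓝 (log c)) :=
    (continuousAt_log hc.ne').tendsto.comp (by simpa using tendsto_inv_atTop_zero.const_add c)
  have hint : Tendsto (fun y => ∫ t in (0)..y, exp (-t) * log t) atTop
      (𝓝 (-eulerMascheroniConstant)) := by
    simpa [integral_exp_neg_mul_log] using
      intervalIntegral_tendsto_integral_Ioi 0 integrableOn_exp_neg_mul_log tendsto_id
  refine ((hlog.add tendsto_exp_neg_mul_log_atTop).add hint).congr' ?_
    |>.trans (by simp [sub_eq_add_neg])
  filter_upwards [eventually_gt_atTop 0] with y hy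
  have : log (c + y⁻¹) = log (1 + c * y) - log y := by
    rw [← log_div (by positivity) hy.ne']
    congr 1
    field_simp
    ring
  rw [expSubInvPrimitive, this]
  ring

theorem abs_exp_neg_sub_inv_one_add_mul_div_le {c y : ℝ} (hc : 0 ≤ c) (hy : 0 < y) :
    |(exp (-y) - 1 / (1 + c * y)) / y| ≤ c + 1 := by
  have hcy : 0 < 1 + c * y := by positivity
  have hinv : 1 - c * y ≤ 1 / (1 + c * y) := by
    rw [le_div_iff₀ hcy]; nlinarith [mul_nonneg hc hy.le]
  have hinv' : 1 / (1 + c * y) ≤ 1 := by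
    rw [div_le_one hcy]; nlinarith [mul_nonneg hc hy.le]
  have hexp := one_sub_le_exp_neg y
  have hexp' : exp (-y) ≤ 1 := exp_le_one_iff.2 (by linarith)
  rw [abs_div, abs_of_pos hy, div_le_iff₀ hy, abs_le]
  constructor <;> nlinarith

theorem abs_exp_neg_sub_inv_one_add_mul_div_le_of_one_le {c y : ℝ} (hc : 0 < c) (hy : 1 ≤ y) :
    |(exp (-y) - 1 / (1 + c * y)) / y| ≤ exp (-y) + c⁻¹ * y ^ (-2 : ℝ) := by
  have hy0 : 0 < y := one_pos.trans_le hy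
  have hrpow : y ^ (-2 : ℝ) = 1 / y ^ 2 := by rw [rpow_neg hy0.le, rpow_two, one_div]
  rw [abs_div, abs_of_pos hy0, div_le_iff₀ hy0, hrpow]
  have hexp : exp (-y) ≤ exp (-y) * y := le_mul_of_one_le_right (exp_pos _).le hy
  have hinv : 1 / (1 + c * y) ≤ c⁻¹ * (1 / y ^ 2) * y := by
    rw [div_le_iff₀ (by positivity)]
    field_simp
    nlinarith
  refine (abs_sub _ _).trans ?_
  rw [abs_of_pos (exp_pos _), abs_of_pos (by positivity)]
  nlinarith

theorem integrableOn_exp_neg_sub_inv_one_add_mul_div {c : ℝ} (hc : 0 < c) :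
    IntegrableOn (fun y => (exp (-y) - 1 / (1 + c * y)) / y) (Ioi 0) := by
  have hmeas : AEStronglyMeasurable (fun y => (exp (-y) - 1 / (1 + c * y)) / y) volume :=
    (by fun_prop : Measurable fun y => (exp (-y) - 1 / (1 + c * y)) / y).aestronglyMeasurable
  rw [← Ioc_union_Ioi_eq_Ioi zero_le_one]
  refine IntegrableOn.union ?_ ?_
  · refine Measure.integrableOn_of_bounded measure_Ioc_lt_top.ne hmeas (M := c + 1) ?_
    filter_upwards [ae_restrict_mem measurableSet_Ioc] with y hy
    exact abs_exp_neg_sub_inv_one_add_mul_div_le hc.le hy.1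
  · refine Integrable.mono' (g := fun y => exp (-y) + c⁻¹ * y ^ (-2 : ℝ)) ?_ hmeas.restrict ?_
    · exact (exp_neg_integrableOn_Ioi 1 one_pos).congr_fun (fun y _ => by simp) measurableSet_Ioi
        |>.add ((integrableOn_Ioi_rpow_of_lt (by norm_num) one_pos).const_mul _)
    filter_upwards [ae_restrict_mem measurableSet_Ioi] with y hy
    exact abs_exp_neg_sub_inv_one_add_mul_div_le_of_one_le hc (le_of_lt hy)

theorem integral_exp_neg_sub_inv_one_add_mul_div {c : ℝ} (hc : 0 < c) :
    ∫ y in Ioi 0, (exp (-y) - 1 / (1 + c * y)) / y = log c - eulerMascheroniConstant := by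
  rw [integral_Ioi_of_hasDerivAt_of_tendsto (continuousWithinAt_expSubInvPrimitive c)
    (fun y hy => hasDerivAt_expSubInvPrimitive hc.le hy)
    (integrableOn_exp_neg_sub_inv_one_add_mul_div hc) (tendsto_expSubInvPrimitive_atTop hc),
    expSubInvPrimitive_zero, sub_zero]

theorem integral_exp_sub_inv_one_add_mul_div (a b : ℝ) (ha : 0 < a) (hb : 0 < b) :
    ∫ x in Set.Ioi (0 : ℝ), (Real.exp (-(b * x)) - 1 / (1 + a * x)) / x
      = Real.log (a / b) - Real.eulerMascheroniConstant := by
  set g : ℝ → ℝ := fun y => (exp (-y) - 1 / (1 + a / b * y)) / y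
  have hscale (x : ℝ) : (exp (-(b * x)) - 1 / (1 + a * x)) / x = b • g (b * x) := by
    simp only [g, smul_eq_mul]
    rw [show a / b * (b * x) = a * x by field_simp, ← mul_div_assoc, mul_div_mul_left _ _ hb.ne']
  simp_rw [hscale, integral_smul, integral_comp_mul_left_Ioi' g 0 hb, mul_zero]
  exact integral_exp_neg_sub_inv_one_add_mul_div (div_pos ha hb)
end

section
/- For every real number a > 0, the digamma function admits the integral representation ψ(a) = ∫_0^∞ (e^{-x}/x - e^{-ax}/(1 - e^{-x})) dx. -/
/-!
Both `digamma` and the integral `I a` on the right are monotone on `(0, ∞)` (`digamma` because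
`log ∘ Gamma` is convex) and satisfy `f (a + 1) = f a + 1 / a` (for `I`, the integrands at `a + 1`
and at `a` differ by `exp (-(a * x))`). Two monotone solutions of this equation differ by a
`1`-periodic function that is squeezed between increments of the solutions over intervals of fixed
length far out, so they agree once they have the same asymptotics along the integers. Both are
`log a + o(1)`: for `digamma (n + 1) = harmonic n - γ` this is the definition of `γ`, and
subtracting Frullani's integral `∫ (exp (-x) - exp (-(a * x))) / x = log a` from `I a` leaves
`-∫ exp (-(a * x)) * (1 / (1 - exp (-x)) - 1 / x)`, a number in `[-1 / a, 0]`.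
-/

open MeasureTheory Real

/-- The digamma function `ψ(x) = Γ'(x)/Γ(x)`. -/
noncomputable def digamma (x : ℝ) : ℝ := deriv Real.Gamma x / Real.Gamma x

open Set Filter Topology

lemma add_natCast_eq_add_sum {f φ : ℝ → ℝ} (hf : ∀ x, 0 < x → f (x + 1) = f x + φ x)
    {x : ℝ} (hx : 0 < x) (m : ℕ) : f (x + m) = f x + ∑ k ∈ Finset.range m, φ (x + k) := by
  induction m with
  | zero => simp
  | succ m ih =>
    rw [Nat.cast_succ, ← add_assoc, hf _ (by positivity), ih, Finset.sum_range_succ, add_assoc]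

theorem eqOn_Ioi_of_monotoneOn_of_add_one {f g φ : ℝ → ℝ} (hf : MonotoneOn f (Ioi 0))
    (hg : MonotoneOn g (Ioi 0)) (hfφ : ∀ x, 0 < x → f (x + 1) = f x + φ x)
    (hgφ : ∀ x, 0 < x → g (x + 1) = g x + φ x) (hφ : Tendsto φ atTop (𝓝 0))
    (hfg : Tendsto (fun n : ℕ ↦ f (n + 1) - g (n + 1)) atTop (𝓝 0)) :
    EqOn f g (Ioi 0) := by
  intro a (ha : 0 < a)
  set M := ⌈a⌉₊
  set S : ℕ → ℝ := fun n ↦ ∑ k ∈ Finset.range M, φ (n + 1 + k)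
  have hS : Tendsto S atTop (𝓝 0) := by
    have hshift (k : ℕ) : Tendsto (fun n : ℕ ↦ (n : ℝ) + 1 + k) atTop atTop :=
      tendsto_atTop_add_const_right _ _ <|
        tendsto_atTop_add_const_right _ _ tendsto_natCast_atTop_atTop
    simpa using tendsto_finsetSum (Finset.range M) fun k _ ↦ hφ.comp (hshift k)
  have hbounds : ∀ n : ℕ, f (n + 1) - g (n + 1) - S n ≤ f a - g a ∧
      f a - g a ≤ f (n + 1) - g (n + 1) + S n := by
    intro n
    have hy : (0 : ℝ) < n + 1 := by positivity
    have hlo : (n : ℝ) + 1 ≤ a + (n + 1 : ℕ) := by push_cast; linarith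
    have hhi : a + (n + 1 : ℕ) ≤ (n : ℝ) + 1 + M := by push_cast; linarith [Nat.le_ceil a]
    have hfa := add_natCast_eq_add_sum hfφ ha (n + 1)
    have hga := add_natCast_eq_add_sum hgφ ha (n + 1)
    have hfM := add_natCast_eq_add_sum hfφ hy M
    have hgM := add_natCast_eq_add_sum hgφ hy M
    have hpos : ∀ t, (n : ℝ) + 1 ≤ t → t ∈ Ioi (0 : ℝ) := fun t ht ↦ hy.trans_le ht
    have h1 := hf (hpos _ le_rfl) (hpos _ hlo) hlo
    have h2 := hf (hpos _ hlo) (hpos _ (hlo.trans hhi)) hhi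
    have h3 := hg (hpos _ le_rfl) (hpos _ hlo) hlo
    have h4 := hg (hpos _ hlo) (hpos _ (hlo.trans hhi)) hhi
    constructor <;> linarith
  have hlim : Tendsto (fun _ : ℕ ↦ f a - g a) atTop (𝓝 0) := by
    refine tendsto_of_tendsto_of_tendsto_of_le_of_le (by simpa using hfg.sub hS)
      (by simpa using hfg.add hS) (fun n ↦ (hbounds n).1) (fun n ↦ (hbounds n).2)
  exact sub_eq_zero.mp (tendsto_const_nhds_iff.mp hlim)

lemma digamma_eq_logDeriv : digamma = logDeriv Gamma := rfl

lemma differentiableAt_Gamma_of_pos {x : ℝ} (hx : 0 < x) : DifferentiableAt ℝ Gamma x :=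
  differentiableOn_Gamma_Ioi.differentiableAt (Ioi_mem_nhds hx)

lemma digamma_add_one {x : ℝ} (hx : 0 < x) : digamma (x + 1) = digamma x + x⁻¹ := by
  have hshift : (fun y ↦ Gamma (y + 1)) =ᶠ[𝓝 x] fun y ↦ y * Gamma y := by
    filter_upwards [eventually_gt_nhds hx] with y hy using Gamma_add_one hy.ne'
  have hcomp := logDeriv_comp (f := Gamma) (g := fun y ↦ y + 1)
    (differentiableAt_Gamma_of_pos (by linarith)) (differentiableAt_id.add_const 1)
  rw [deriv_add_const, deriv_id'', mul_one] at hcomp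
  rw [digamma_eq_logDeriv, ← hcomp, Function.comp_def, (logDeriv_congr_nhds hshift).eq_of_nhds]
  exact (logDeriv_mul (f := id) x hx.ne' (Gamma_pos_of_pos hx).ne' differentiableAt_id
    (differentiableAt_Gamma_of_pos hx)).trans (by rw [logDeriv_id, one_div, add_comm])

lemma monotoneOn_digamma : MonotoneOn digamma (Ioi 0) := by
  have hdiff : ∀ x ∈ Ioi (0 : ℝ), DifferentiableAt ℝ (log ∘ Gamma) x := fun x hx ↦
    (differentiableAt_Gamma_of_pos hx).log (Gamma_pos_of_pos hx).ne'
  refine (convexOn_log_Gamma.monotoneOn_deriv hdiff).congr fun x hx ↦ ?_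
  exact deriv_log_comp_eq_logDeriv (differentiableAt_Gamma_of_pos hx) (Gamma_pos_of_pos hx).ne'

lemma digamma_nat_add_one (n : ℕ) :
    digamma (n + 1) = -eulerMascheroniConstant + harmonic n := by
  have hfac : (n.factorial : ℝ) ≠ 0 := by positivity
  rw [digamma, deriv_Gamma_nat, Gamma_nat_eq_factorial, mul_div_cancel_left₀ _ hfac]

lemma tendsto_digamma_nat_add_one_sub_log :
    Tendsto (fun n : ℕ ↦ digamma (n + 1) - log (n + 1)) atTop (𝓝 0) := by
  simpa [digamma_nat_add_one, sub_eq_add_neg, add_assoc] using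
    tendsto_harmonic_sub_log_add_one.const_add (-eulerMascheroniConstant)

lemma integrableOn_exp_neg_mul_Ioi_zero {a : ℝ} (ha : 0 < a) :
    IntegrableOn (fun x ↦ exp (-(a * x))) (Ioi 0) := by
  simpa only [neg_mul] using exp_neg_integrableOn_Ioi 0 ha

lemma integral_exp_neg_mul_Ioi_zero {a : ℝ} (ha : 0 < a) :
    ∫ x in Ioi (0 : ℝ), exp (-(a * x)) = a⁻¹ := by
  simpa only [neg_mul, mul_zero, exp_zero, neg_div_neg_eq, one_div] using
    integral_exp_mul_Ioi (neg_lt_zero.mpr ha) 0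

lemma abs_exp_neg_sub_exp_neg_le (u v : ℝ) :
    |exp (-u) - exp (-v)| ≤ |u - v| * exp (-min u v) := by
  wlog huv : u ≤ v generalizing u v
  · simpa only [abs_sub_comm, min_comm] using this v u (le_of_not_ge huv)
  have hsplit : exp (-u) - exp (-v) = exp (-u) * (1 - exp (-(v - u))) := by
    rw [mul_sub, mul_one, ← exp_add]; ring_nf
  have hle : exp (-(v - u)) ≤ 1 := exp_le_one_iff.mpr (by linarith)
  rw [hsplit, abs_mul, abs_of_pos (exp_pos _), abs_of_nonneg (sub_nonneg.mpr hle),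
    min_eq_left huv, abs_sub_comm, abs_of_nonneg (sub_nonneg.mpr huv), mul_comm (v - u)]
  exact mul_le_mul_of_nonneg_left (by linarith [one_sub_le_exp_neg (v - u)]) (exp_pos _).le

lemma integrableOn_exp_neg_sub_exp_neg_mul_div {a : ℝ} (ha : 0 < a) :
    IntegrableOn (fun x ↦ (exp (-x) - exp (-(a * x))) / x) (Ioi 0) := by
  have hcont : ContinuousOn (fun x ↦ (exp (-x) - exp (-(a * x))) / x) (Ioi 0) :=
    ContinuousOn.div (by fun_prop) continuousOn_id fun x hx ↦ (mem_Ioi.mp hx).ne'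
  refine ((integrableOn_exp_neg_mul_Ioi_zero (lt_min ha one_pos)).const_mul |a - 1|).mono'
    (hcont.aestronglyMeasurable measurableSet_Ioi) ?_
  filter_upwards [ae_restrict_mem measurableSet_Ioi] with x (hx : 0 < x)
  have h := abs_exp_neg_sub_exp_neg_le x (a * x)
  rw [show x - a * x = (1 - a) * x by ring, abs_mul, abs_of_pos hx, abs_sub_comm 1 a,
    show min x (a * x) = min a 1 * x by rw [min_mul_of_nonneg _ _ hx.le, one_mul, min_comm]] at h
  rw [norm_div, norm_of_nonneg hx.le, Real.norm_eq_abs, div_le_iff₀ hx]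
  exact h.trans_eq (by ring)

lemma integral_exp_neg_sub_exp_neg_mul_div {a : ℝ} (ha : 0 < a) :
    ∫ x in Ioi (0 : ℝ), (exp (-x) - exp (-(a * x))) / x = log a := by
  have hcont : Continuous fun x : ℝ ↦ exp (-x) := by fun_prop
  have h := Frullani.integral_Ioi_eq (f := fun x ↦ exp (-x)) (a := 1) (b := a) (L := 1) (R := 0)
    (hcont.locallyIntegrable.locallyIntegrableOn _) one_pos ha
    (by simpa using (hcont.tendsto 0).mono_left nhdsWithin_le_nhds)
    tendsto_exp_neg_atTop_nhds_zero
    (by simpa [smul_eq_mul, inv_mul_eq_div] using integrableOn_exp_neg_sub_exp_neg_mul_div ha)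
  simpa [smul_eq_mul, inv_mul_eq_div] using h

lemma one_sub_exp_neg_pos {x : ℝ} (hx : 0 < x) : 0 < 1 - exp (-x) :=
  sub_pos.mpr (exp_lt_one_iff.mpr (neg_lt_zero.mpr hx))

noncomputable def gaussCorrection (x : ℝ) : ℝ := (1 - exp (-x))⁻¹ - x⁻¹

lemma gaussCorrection_mem_Icc {x : ℝ} (hx : 0 < x) : gaussCorrection x ∈ Icc 0 1 := by
  have hpos := one_sub_exp_neg_pos hx
  have hle : 1 - exp (-x) ≤ x := by linarith [one_sub_le_exp_neg x]
  have hexp : (x + 1) * exp (-x) ≤ 1 :=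
    calc (x + 1) * exp (-x) ≤ exp x * exp (-x) := by gcongr; exact add_one_le_exp x
      _ = 1 := by rw [← exp_add, add_neg_cancel, exp_zero]
  refine ⟨sub_nonneg.mpr (inv_anti₀ hpos hle), ?_⟩
  rw [gaussCorrection, inv_eq_one_div, inv_eq_one_div, div_sub_div _ _ hpos.ne' hx.ne',
    div_le_one (mul_pos hpos hx)]
  linarith

lemma norm_exp_neg_mul_mul_gaussCorrection_le {a x : ℝ} (hx : 0 < x) :
    ‖exp (-(a * x)) * gaussCorrection x‖ ≤ exp (-(a * x)) := by
  obtain ⟨h0, h1⟩ := gaussCorrection_mem_Icc hx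
  rw [norm_mul, norm_of_nonneg (exp_pos _).le, norm_of_nonneg h0]
  exact mul_le_of_le_one_right (exp_pos _).le h1

lemma continuousOn_gaussCorrection : ContinuousOn gaussCorrection (Ioi 0) :=
  (ContinuousOn.inv₀ (by fun_prop) fun _ hx ↦ (one_sub_exp_neg_pos hx).ne').sub
    (continuousOn_inv₀.mono fun _ hx ↦ (mem_Ioi.mp hx).ne')

lemma integrableOn_exp_neg_mul_mul_gaussCorrection {a : ℝ} (ha : 0 < a) :
    IntegrableOn (fun x ↦ exp (-(a * x)) * gaussCorrection x) (Ioi 0) := by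
  have hcont : ContinuousOn (fun x ↦ exp (-(a * x)) * gaussCorrection x) (Ioi 0) :=
    ContinuousOn.mul (by fun_prop) continuousOn_gaussCorrection
  refine (integrableOn_exp_neg_mul_Ioi_zero ha).mono'
    (hcont.aestronglyMeasurable measurableSet_Ioi) ?_
  filter_upwards [ae_restrict_mem measurableSet_Ioi] with x hx
  exact norm_exp_neg_mul_mul_gaussCorrection_le hx

noncomputable def digammaIntegrand (a x : ℝ) : ℝ :=
  exp (-x) / x - exp (-(a * x)) / (1 - exp (-x))

lemma digammaIntegrand_eq {a x : ℝ} (hx : 0 < x) :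
    digammaIntegrand a x = (exp (-x) - exp (-(a * x))) / x
      - exp (-(a * x)) * gaussCorrection x := by
  have := (one_sub_exp_neg_pos hx).ne'
  rw [digammaIntegrand, gaussCorrection]
  field_simp
  ring

lemma integrableOn_digammaIntegrand {a : ℝ} (ha : 0 < a) :
    IntegrableOn (digammaIntegrand a) (Ioi 0) :=
  ((integrableOn_exp_neg_sub_exp_neg_mul_div ha).sub
    (integrableOn_exp_neg_mul_mul_gaussCorrection ha)).congr_fun
    (fun _ hx ↦ (digammaIntegrand_eq hx).symm) measurableSet_Ioi

lemma integral_digammaIntegrand {a : ℝ} (ha : 0 < a) :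
    ∫ x in Ioi 0, digammaIntegrand a x
      = log a - ∫ x in Ioi 0, exp (-(a * x)) * gaussCorrection x := by
  rw [setIntegral_congr_fun measurableSet_Ioi fun _ hx ↦ digammaIntegrand_eq hx,
    integral_sub (integrableOn_exp_neg_sub_exp_neg_mul_div ha)
      (integrableOn_exp_neg_mul_mul_gaussCorrection ha),
    integral_exp_neg_sub_exp_neg_mul_div ha]

lemma abs_integral_digammaIntegrand_sub_log_le {a : ℝ} (ha : 0 < a) :
    |(∫ x in Ioi 0, digammaIntegrand a x) - log a| ≤ a⁻¹ := by
  rw [integral_digammaIntegrand ha, sub_sub_cancel_left, abs_neg, ← Real.norm_eq_abs,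
    ← integral_exp_neg_mul_Ioi_zero ha]
  refine norm_integral_le_of_norm_le (integrableOn_exp_neg_mul_Ioi_zero ha) ?_
  filter_upwards [ae_restrict_mem measurableSet_Ioi] with x hx
  exact norm_exp_neg_mul_mul_gaussCorrection_le hx

lemma tendsto_integral_digammaIntegrand_nat_add_one_sub_log :
    Tendsto (fun n : ℕ ↦ (∫ x in Ioi 0, digammaIntegrand (n + 1) x) - log (n + 1)) atTop
      (𝓝 0) := by
  refine squeeze_zero_norm (fun n ↦ abs_integral_digammaIntegrand_sub_log_le (by positivity)) ?_
  simpa only [one_div] using tendsto_one_div_add_atTop_nhds_zero_nat (𝕜 := ℝ)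

lemma digammaIntegrand_add_one_sub {a x : ℝ} (hx : 0 < x) :
    digammaIntegrand (a + 1) x - digammaIntegrand a x = exp (-(a * x)) := by
  have := (one_sub_exp_neg_pos hx).ne'
  have hexp : exp (-((a + 1) * x)) = exp (-(a * x)) * exp (-x) := by rw [← exp_add]; ring_nf
  rw [digammaIntegrand, digammaIntegrand, hexp]
  field_simp
  ring

lemma integral_digammaIntegrand_add_one {a : ℝ} (ha : 0 < a) :
    ∫ x in Ioi 0, digammaIntegrand (a + 1) x
      = (∫ x in Ioi 0, digammaIntegrand a x) + a⁻¹ := by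
  rw [← integral_exp_neg_mul_Ioi_zero ha, ← integral_add (integrableOn_digammaIntegrand ha)
    (integrableOn_exp_neg_mul_Ioi_zero ha)]
  refine setIntegral_congr_fun measurableSet_Ioi fun x hx ↦ ?_
  linarith [digammaIntegrand_add_one_sub (a := a) hx]

lemma monotoneOn_integral_digammaIntegrand :
    MonotoneOn (fun a ↦ ∫ x in Ioi 0, digammaIntegrand a x) (Ioi 0) := by
  intro a (ha : 0 < a) b (hb : 0 < b) hab
  refine setIntegral_mono_on (integrableOn_digammaIntegrand ha) (integrableOn_digammaIntegrand hb)
    measurableSet_Ioi fun x (hx : 0 < x) ↦ ?_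
  have : exp (-(b * x)) ≤ exp (-(a * x)) := exp_le_exp.mpr (by nlinarith)
  exact sub_le_sub_left (div_le_div_of_nonneg_right this (one_sub_exp_neg_pos hx).le) _

theorem digamma_eq_integral (a : ℝ) (ha : 0 < a) :
    digamma a
      = ∫ x in Set.Ioi (0 : ℝ),
          (Real.exp (-x) / x - Real.exp (-(a * x)) / (1 - Real.exp (-x))) := by
  have hasymp : Tendsto (fun n : ℕ ↦
      digamma (n + 1) - ∫ x in Ioi 0, digammaIntegrand (n + 1) x) atTop (𝓝 0) := by
    simpa using tendsto_digamma_nat_add_one_sub_log.sub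
      tendsto_integral_digammaIntegrand_nat_add_one_sub_log
  exact eqOn_Ioi_of_monotoneOn_of_add_one monotoneOn_digamma
    monotoneOn_integral_digammaIntegrand (fun _ hx ↦ digamma_add_one hx)
    (fun _ hx ↦ integral_digammaIntegrand_add_one hx) tendsto_inv_atTop_zero hasymp ha
end

section
/- For all real numbers a > 0 and b > 0, ∫_0^∞ (e^{-x^a} - 1/(1+x^b)) dx/x = -γ/a; in particular the value is independent of b. -/
/-!
Substituting `y = x ^ a` turns the integral into `a⁻¹ * J (b / a)`, where
`J c = ∫₀^∞ (exp (-x) - 1 / (1 + x ^ c)) dx / x`. The difference `J c - J 1` vanishes, since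
its integrand `1 / (1 + x) - 1 / (1 + x ^ c)` changes sign under `x ↦ x⁻¹`, which preserves
`dx / x`. Integrating `J 1` by parts against `log x` gives
`J 1 = ∫ log x * exp (-x) dx - ∫ log x / (1 + x) ^ 2 dx = Γ'(1) - 0 = -γ`,
the second integral vanishing by the same symmetry.
-/

open MeasureTheory Real Set Filter Asymptotics Topology

theorem integral_comp_rpow_div_self (f : ℝ → ℝ) {p : ℝ} (hp : p ≠ 0) :
    ∫ x in Ioi 0, f (x ^ p) / x = |p|⁻¹ * ∫ x in Ioi 0, f x / x := by
  rw [← integral_comp_rpow_Ioi (fun x ↦ f x / x) hp, ← integral_const_mul]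
  refine setIntegral_congr_fun measurableSet_Ioi fun x (hx : 0 < x) ↦ ?_
  have : x ^ p ≠ 0 := (rpow_pos_of_pos hx p).ne'
  rw [smul_eq_mul, rpow_sub_one hx.ne']
  field_simp

theorem integral_div_self_eq_zero_of_comp_inv {f : ℝ → ℝ}
    (hf : ∀ x, 0 < x → f x⁻¹ = -f x) :
    ∫ x in Ioi 0, f x / x = 0 := by
  have h := integral_comp_rpow_div_self f (p := -1) (by norm_num)
  have hneg : ∫ x in Ioi 0, f (x ^ (-1 : ℝ)) / x = -∫ x in Ioi 0, f x / x := by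
    rw [← integral_neg]
    refine setIntegral_congr_fun measurableSet_Ioi fun x (hx : 0 < x) ↦ ?_
    rw [rpow_neg_one, hf x hx, neg_div]
  rw [hneg] at h
  norm_num at h
  linarith

theorem integrableOn_div_self_of_isBigO {g : ℝ → ℝ} (hg : ContinuousOn g (Ioi 0)) {a b : ℝ}
    (ha : 0 < a) (hb : 0 < b) (h_top : g =O[atTop] (· ^ (-a))) (h_bot : g =O[𝓝[>] 0] (· ^ b)) :
    IntegrableOn (fun x ↦ g x / x) (Ioi 0) := by
  have h := mellin_convergent_of_isBigO_scalar (s := 0) (hg.locallyIntegrableOn measurableSet_Ioi)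
    h_top ha (b := -b) (by simpa using h_bot) (by linarith)
  refine h.congr_fun (fun x _ ↦ ?_) measurableSet_Ioi
  simp only [zero_sub, rpow_neg_one, inv_mul_eq_div]

theorem integrableOn_log_mul_of_isBigO {f : ℝ → ℝ} (hf : ContinuousOn f (Ici 0)) {a : ℝ}
    (ha : 1 < a) (h_top : f =O[atTop] (· ^ (-a))) :
    IntegrableOn (fun x ↦ log x * f x) (Ioi 0) := by
  have h_cont : ContinuousOn (fun x ↦ log x * f x) (Ioi 0) :=
    (continuousOn_log.mono fun x (hx : 0 < x) ↦ hx.ne').mul (hf.mono Ioi_subset_Ici_self)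
  have h_bdd : f =O[𝓝[>] 0] (· ^ (-0 : ℝ)) := by
    simpa using ((hf 0 self_mem_Ici).mono Ioi_subset_Ici_self).tendsto.isBigO_one ℝ
  have h := mellin_convergent_of_isBigO_scalar (s := 1)
    (h_cont.locallyIntegrableOn measurableSet_Ioi)
    (isBigO_rpow_top_log_smul (b := (1 + a) / 2) (by linarith) h_top) (by linarith)
    (isBigO_rpow_zero_log_smul (b := 1 / 2) (by norm_num) h_bdd) (by norm_num)
  simpa using h

theorem integral_log_mul_exp_neg : ∫ t in Ioi 0, log t * exp (-t) = -eulerMascheroniConstant := by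
  have hΓ : HasDerivAt Complex.GammaIntegral (-eulerMascheroniConstant) 1 := by
    refine Complex.hasDerivAt_Gamma_one.congr_of_eventuallyEq ?_
    filter_upwards [(isOpen_lt continuous_const Complex.continuous_re).mem_nhds
      (by simp : (0 : ℝ) < (1 : ℂ).re)] with s hs
    exact (Complex.Gamma_eq_integral hs).symm
  have h := (Complex.hasDerivAt_GammaIntegral (s := 1) (by simp)).unique hΓ
  simp only [sub_self, Complex.cpow_zero, one_mul] at h
  rw [← Complex.ofReal_inj, Complex.ofReal_neg, ← h, ← integral_complex_ofReal]
  push_cast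
  rfl

theorem integrableOn_log_mul_exp_neg : IntegrableOn (fun x ↦ log x * exp (-x)) (Ioi 0) :=
  integrableOn_log_mul_of_isBigO (a := 2) (by fun_prop) one_lt_two
    (by simpa using (isLittleO_exp_neg_mul_rpow_atTop one_pos (-2)).isBigO)

theorem integrableOn_log_div_one_add_sq : IntegrableOn (fun x ↦ log x / (1 + x) ^ 2) (Ioi 0) := by
  have h_top : (fun x : ℝ ↦ ((1 + x) ^ 2)⁻¹) =O[atTop] (· ^ (-2 : ℝ)) := by
    refine IsBigO.of_bound 1 ?_
    filter_upwards [eventually_gt_atTop 0] with x hx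
    rw [norm_of_nonneg (by positivity), norm_of_nonneg (by positivity), one_mul, rpow_neg hx.le]
    norm_cast
    gcongr
    linarith
  simpa [div_eq_mul_inv] using integrableOn_log_mul_of_isBigO (fun x hx ↦ by
    have : (1 + x) ^ 2 ≠ 0 := by have := mem_Ici.mp hx; positivity
    fun_prop (disch := assumption)) one_lt_two h_top

theorem integral_log_div_one_add_sq : ∫ x in Ioi 0, log x / (1 + x) ^ 2 = 0 := by
  have h_odd (x : ℝ) (hx : 0 < x) :
      x⁻¹ * log x⁻¹ / (1 + x⁻¹) ^ 2 = -(x * log x / (1 + x) ^ 2) := by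
    have : 1 + x ≠ 0 := by linarith
    rw [log_inv]
    field_simp
    ring
  refine (setIntegral_congr_fun measurableSet_Ioi fun x (hx : 0 < x) ↦ ?_).trans
    (integral_div_self_eq_zero_of_comp_inv (f := fun x ↦ x * log x / (1 + x) ^ 2) h_odd)
  field_simp

theorem isBigO_exp_neg_sub_inv_one_add_rpow_atTop (c : ℝ) :
    (fun x ↦ exp (-x) - 1 / (1 + x ^ c)) =O[atTop] (· ^ (-min 1 c)) := by
  have h_exp : (fun x : ℝ ↦ exp (-x)) =O[atTop] (· ^ (-min 1 c)) := by
    simpa using (isLittleO_exp_neg_mul_rpow_atTop one_pos (-min 1 c)).isBigO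
  have h_inv : (fun x : ℝ ↦ 1 / (1 + x ^ c)) =O[atTop] (· ^ (-min 1 c)) := by
    refine IsBigO.of_bound 1 ?_
    filter_upwards [eventually_ge_atTop 1] with x hx
    have hxc : 0 < x ^ c := rpow_pos_of_pos (by linarith) c
    rw [norm_of_nonneg (by positivity), norm_of_nonneg (by positivity), one_mul]
    calc 1 / (1 + x ^ c) ≤ (x ^ c)⁻¹ := by rw [one_div]; gcongr; linarith
      _ = x ^ (-c) := (rpow_neg (by linarith) c).symm
      _ ≤ x ^ (-min 1 c) := rpow_le_rpow_of_exponent_le hx (neg_le_neg (min_le_right 1 c))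
  exact h_exp.sub h_inv

theorem isBigO_exp_neg_sub_inv_one_add_rpow_nhdsGT_zero (c : ℝ) :
    (fun x ↦ exp (-x) - 1 / (1 + x ^ c)) =O[𝓝[>] 0] (· ^ min 1 c) := by
  refine IsBigO.of_bound 1 ?_
  filter_upwards [Ioc_mem_nhdsGT zero_lt_one] with x ⟨hx0, hx1⟩
  have hxc : 0 < x ^ c := rpow_pos_of_pos hx0 c
  have h_exp : 1 - x ≤ exp (-x) := by linarith [add_one_le_exp (-x)]
  have h_exp' : exp (-x) ≤ 1 := exp_le_one_iff.2 (by linarith)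
  have h_inv : 1 - x ^ c ≤ 1 / (1 + x ^ c) := by
    rw [le_div_iff₀ (by positivity)]; nlinarith
  have h_inv' : 1 / (1 + x ^ c) ≤ 1 := by
    rw [div_le_one (by positivity)]; linarith
  have h_x : x ≤ x ^ min 1 c := by
    simpa using rpow_le_rpow_of_exponent_ge hx0 hx1 (min_le_left 1 c)
  have h_xc : x ^ c ≤ x ^ min 1 c := rpow_le_rpow_of_exponent_ge hx0 hx1 (min_le_right 1 c)
  rw [norm_of_nonneg (rpow_nonneg hx0.le _), one_mul, Real.norm_eq_abs, abs_le]
  constructor <;> linarith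

theorem integrableOn_exp_neg_sub_inv_one_add_rpow_div {c : ℝ} (hc : 0 < c) :
    IntegrableOn (fun x ↦ (exp (-x) - 1 / (1 + x ^ c)) / x) (Ioi 0) := by
  refine integrableOn_div_self_of_isBigO (fun x (hx : 0 < x) ↦ ?_) (lt_min one_pos hc)
    (lt_min one_pos hc) (isBigO_exp_neg_sub_inv_one_add_rpow_atTop c)
    (isBigO_exp_neg_sub_inv_one_add_rpow_nhdsGT_zero c)
  have : 1 + x ^ c ≠ 0 := by positivity
  fun_prop (disch := first | assumption | exact Or.inl hx.ne')

theorem integral_inv_one_add_sub_inv_one_add_rpow_div (c : ℝ) :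
    ∫ x in Ioi (0 : ℝ), (1 / (1 + x) - 1 / (1 + x ^ c)) / x = 0 := by
  refine integral_div_self_eq_zero_of_comp_inv fun x hx ↦ ?_
  have : 0 < x ^ c := rpow_pos_of_pos hx c
  rw [inv_rpow hx.le]
  field_simp
  ring

theorem integral_exp_neg_sub_inv_one_add_div :
    ∫ x in Ioi 0, (exp (-x) - 1 / (1 + x)) / x = -eulerMascheroniConstant := by
  have hu_top : (fun x ↦ exp (-x) - 1 / (1 + x)) =O[atTop] (· ^ (-1 : ℝ)) := by
    simpa using isBigO_exp_neg_sub_inv_one_add_rpow_atTop 1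
  have hu_bot : (fun x ↦ exp (-x) - 1 / (1 + x)) =O[𝓝[>] 0] (fun x ↦ x) := by
    simpa using isBigO_exp_neg_sub_inv_one_add_rpow_nhdsGT_zero 1
  have hu (x : ℝ) (hx : x ∈ Ioi 0) :
      HasDerivAt (fun x ↦ exp (-x) - 1 / (1 + x)) (-exp (-x) + 1 / (1 + x) ^ 2) x := by
    have hx' : 1 + x ≠ 0 := by linarith [mem_Ioi.mp hx]
    simp only [one_div]
    refine ((hasDerivAt_neg x).exp.sub (((hasDerivAt_id x).const_add 1).inv hx')).congr_deriv ?_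
    simp only [id]
    ring
  have h_zero : Tendsto ((fun x ↦ exp (-x) - 1 / (1 + x)) * log) (𝓝[>] 0) (𝓝 0) := by
    refine (hu_bot.mul (isBigO_refl log _)).trans_tendsto ?_
    simpa using (continuous_mul_log.tendsto 0).mono_left nhdsWithin_le_nhds
  have h_infty : Tendsto ((fun x ↦ exp (-x) - 1 / (1 + x)) * log) atTop (𝓝 0) := by
    refine (hu_top.mul (isBigO_refl log _)).trans_tendsto ?_
    simpa [rpow_neg_one, inv_mul_eq_div] using isLittleO_log_id_atTop.tendsto_div_nhds_zero
  have h_exp : IntegrableOn (fun x ↦ -(log x * exp (-x))) (Ioi 0) :=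
    integrableOn_log_mul_exp_neg.neg
  have h_div : IntegrableOn (fun x ↦ (exp (-x) - 1 / (1 + x)) * x⁻¹) (Ioi 0) := by
    simpa [div_eq_mul_inv] using integrableOn_exp_neg_sub_inv_one_add_rpow_div one_pos
  have hu'_log (x : ℝ) :
      -(log x * exp (-x)) + log x / (1 + x) ^ 2 = (-exp (-x) + 1 / (1 + x) ^ 2) * log x := by
    ring
  have h_parts := integral_Ioi_mul_deriv_eq_deriv_mul hu (fun x hx ↦ hasDerivAt_log (ne_of_gt hx))
    h_div ((h_exp.add integrableOn_log_div_one_add_sq).congr_fun (fun x _ ↦ hu'_log x)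
      measurableSet_Ioi) h_zero h_infty
  simp only [← hu'_log, ← div_eq_mul_inv] at h_parts
  rw [h_parts, integral_add h_exp integrableOn_log_div_one_add_sq,
    integral_neg, integral_log_mul_exp_neg, integral_log_div_one_add_sq]
  ring

theorem integral_exp_neg_sub_inv_one_add_rpow_div {c : ℝ} (hc : 0 < c) :
    ∫ x in Ioi 0, (exp (-x) - 1 / (1 + x ^ c)) / x = -eulerMascheroniConstant := by
  have h_one : IntegrableOn (fun x ↦ (exp (-x) - 1 / (1 + x)) / x) (Ioi 0) := by
    simpa only [rpow_one] using integrableOn_exp_neg_sub_inv_one_add_rpow_div one_pos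
  calc ∫ x in Ioi 0, (exp (-x) - 1 / (1 + x ^ c)) / x
      = (∫ x in Ioi 0, (exp (-x) - 1 / (1 + x)) / x) +
          ∫ x in Ioi 0, ((exp (-x) - 1 / (1 + x ^ c)) / x - (exp (-x) - 1 / (1 + x)) / x) := by
        rw [integral_sub (integrableOn_exp_neg_sub_inv_one_add_rpow_div hc) h_one]
        ring
    _ = (∫ x in Ioi 0, (exp (-x) - 1 / (1 + x)) / x) +
          ∫ x in Ioi 0, (1 / (1 + x) - 1 / (1 + x ^ c)) / x := by
        congr 1
        exact setIntegral_congr_fun measurableSet_Ioi fun x _ ↦ by ring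
    _ = -eulerMascheroniConstant := by
        rw [integral_exp_neg_sub_inv_one_add_div, integral_inv_one_add_sub_inv_one_add_rpow_div,
          add_zero]

theorem integral_exp_rpow_sub_inv_one_add_rpow_div (a b : ℝ) (ha : 0 < a) (hb : 0 < b) :
    ∫ x in Set.Ioi (0 : ℝ), (Real.exp (-(x ^ a)) - 1 / (1 + x ^ b)) / x
      = -Real.eulerMascheroniConstant / a := by
  have h := integral_comp_rpow_div_self (fun y : ℝ ↦ exp (-y) - 1 / (1 + y ^ (b / a))) ha.ne'
  rw [abs_of_pos ha, integral_exp_neg_sub_inv_one_add_rpow_div (div_pos hb ha)] at h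
  rw [div_eq_inv_mul, ← h]
  refine setIntegral_congr_fun measurableSet_Ioi fun x (hx : 0 < x) ↦ ?_
  rw [← rpow_mul hx.le, mul_div_cancel₀ b ha.ne']
end
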